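/- Let H_P be the Hilbert space of 2π-periodic (in the real direction) entire functions square integrable against (1/(2π)) e^{-|z|²} dz, and define the creation operator a⁺ as the orthogonal projection onto H_P of multiplication by z, and the annihilation operator a as differentiation: (aχ)(z) = χ'(z). Then a⁺ and a are mutually adjoint: ⟨a⁺ψ, χ⟩ = ⟨ψ, aχ⟩ for all ψ, χ ∈ H_P for which both sides are defined. -/

import Mathlib

/-!
Write `∂ = (∂ₓ - i ∂_y) / 2` for the Wirtinger derivative and `γ z = exp (-‖z‖²)`, so that
`∂γ = -z̄ γ`. Since `ψ̄` is antiholomorphic and `χ` is holomorphic,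
`∂ (ψ̄ χ γ) = (ψ̄ χ' - (z ψ)‾ χ) γ`; after the projection property replaces `φ` by `z ψ`
when paired with `χ ∈ H_P`, the claim is `∫ ∂ (ψ̄ χ γ) = 0`.

Periodicity bounds `ψ`, `χ` and their derivatives on every horizontal strip, so the Gaussian makes
`G = ψ̄ χ γ` and its derivative integrable along horizontal lines, locally uniformly in the height.
On each line `∫ ∂ₓ G dx = 0`, and `∫ ∂_y G dx` is the derivative in `y` of the integrable function
`y ↦ ∫ G dx`, so it integrates to `0` as well.
-/

open MeasureTheory Complex Real

/-- Membership in `H_P`: entire, `2π`-periodic in the real direction, and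
square integrable against the Gaussian measure `(1/(2π)) e^{-|z|²} dz`. -/
def memHP (f : ℂ → ℂ) : Prop :=
  Differentiable ℂ f ∧ (∀ z, f (z + 2 * π) = f z) ∧
    Integrable (fun z : ℂ => ‖f z‖ ^ 2 * Real.exp (-‖z‖ ^ 2))

open Filter Set Function ComplexConjugate

lemma Function.Periodic.exists_norm_le_of_abs_im_le {E : Type*} [NormedAddCommGroup E]
    {f : ℂ → E} {c : ℝ} (hf : Continuous f) (hper : Periodic f c) (hc : 0 < c) (T : ℝ) :
    ∃ C, ∀ z : ℂ, |z.im| ≤ T → ‖f z‖ ≤ C := by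
  obtain ⟨C, hC⟩ := (isCompact_Icc.reProdIm (isCompact_Icc (a := -T) (b := T)) :
    IsCompact (Icc 0 c ×ℂ Icc (-T) T)).exists_bound_of_continuousOn hf.continuousOn
  refine ⟨C, fun z hz => ?_⟩
  rw [← hper.sub_int_mul_eq ⌊z.re / c⌋]
  refine hC _ ⟨⟨?_, ?_⟩, ?_⟩
  · simpa using Int.sub_floor_div_mul_nonneg z.re hc
  · simpa using (Int.sub_floor_div_mul_lt z.re hc).le
  · simpa using abs_le.mp hz

lemma Function.Periodic.fderiv {F : ℂ → ℂ} {c : ℂ} (hper : Periodic F c) :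
    Periodic (fderiv ℝ F) c := fun z => by
  rw [← fderiv_comp_add_right, hper.funext]

section Fubini

variable {E : Type*} [NormedAddCommGroup E] {f : ℂ → E}

lemma integrable_comp_add_mul_I (hf : Integrable f) :
    Integrable fun p : ℝ × ℝ => f (p.2 + p.1 * I) := by
  have := (volume_preserving_equiv_real_prod.symm.integrable_comp_emb
    measurableEquivRealProd.symm.measurableEmbedding).mpr hf
  rw [Measure.volume_eq_prod] at this ⊢
  refine this.swap.congr (ae_of_all _ fun p => ?_)
  simp [mk_eq_add_mul_I]

variable [NormedSpace ℝ E]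

lemma integral_eq_integral_integral_add_mul_I (hf : Integrable f) :
    ∫ z, f z = ∫ y : ℝ, ∫ x : ℝ, f (x + y * I) := by
  rw [← volume_preserving_equiv_real_prod.symm.integral_comp
    measurableEquivRealProd.symm.measurableEmbedding, Measure.volume_eq_prod,
    ← integral_prod_swap, ← integral_prod _ (integrable_comp_add_mul_I hf)]
  simp [mk_eq_add_mul_I]

lemma MeasureTheory.Integrable.integral_add_mul_I (hf : Integrable f) :
    Integrable fun y : ℝ => ∫ x : ℝ, f (x + y * I) :=
  (integrable_comp_add_mul_I hf).integral_prod_left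

end Fubini

section Lines

variable {E : Type*} [NormedAddCommGroup E] [NormedSpace ℝ E] {G : ℂ → E} {x y : ℝ}

lemma DifferentiableAt.hasDerivAt_horizontal (h : DifferentiableAt ℝ G (x + y * I)) :
    HasDerivAt (fun t : ℝ => G (t + y * I)) (fderiv ℝ G (x + y * I) 1) x :=
  h.hasFDerivAt.comp_hasDerivAt (f := fun t : ℝ => (t : ℂ) + y * I) x
    ((hasDerivAt_id x).ofReal_comp.add_const _)

lemma DifferentiableAt.hasDerivAt_vertical (h : DifferentiableAt ℝ G (x + y * I)) :
    HasDerivAt (fun t : ℝ => G (x + t * I)) (fderiv ℝ G (x + y * I) I) y :=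
  (h.hasFDerivAt.comp_hasDerivAt (f := fun t : ℝ => (x : ℂ) + t * I) y
    (((hasDerivAt_id y).ofReal_comp.mul_const I).const_add _)).congr_deriv (by simp)

end Lines

noncomputable def wirtingerDeriv (G : ℂ → ℂ) (z : ℂ) : ℂ :=
  (fderiv ℝ G z 1 - I * fderiv ℝ G z I) / 2

section Wirtinger

variable {F G f : ℂ → ℂ} {z : ℂ}

lemma wirtingerDeriv_mul (hF : DifferentiableAt ℝ F z) (hG : DifferentiableAt ℝ G z) :
    wirtingerDeriv (fun w => F w * G w) z =
      F z * wirtingerDeriv G z + G z * wirtingerDeriv F z := by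
  simp only [wirtingerDeriv, fderiv_fun_mul hF hG, add_apply, smul_apply, smul_eq_mul]
  ring

lemma fderiv_apply_I (f : ℂ → ℂ) : fderiv ℂ f z I = I * fderiv ℂ f z 1 := by
  rw [← smul_eq_mul, ← map_smul, smul_eq_mul, mul_one]

lemma wirtingerDeriv_eq_deriv (hf : DifferentiableAt ℂ f z) :
    wirtingerDeriv f z = deriv f z := by
  simp only [wirtingerDeriv, hf.fderiv_restrictScalars ℝ,
    ContinuousLinearMap.coe_restrictScalars', fderiv_apply_I, fderiv_apply_one_eq_deriv]
  linear_combination (-deriv f z / 2) * I_sq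

lemma wirtingerDeriv_conj_comp (hf : DifferentiableAt ℂ f z) :
    wirtingerDeriv (fun w => conj (f w)) z = 0 := by
  have h : HasFDerivAt (fun w => conj (f w))
      ((conjCLE : ℂ →L[ℝ] ℂ).comp ((fderiv ℂ f z).restrictScalars ℝ)) z :=
    conjCLE.hasFDerivAt.comp z (hf.hasFDerivAt.restrictScalars ℝ)
  simp only [wirtingerDeriv, h.fderiv, ContinuousLinearMap.comp_apply,
    ContinuousLinearMap.coe_restrictScalars', fderiv_apply_I, ContinuousLinearEquiv.coe_coe,
    conjCLE_apply, map_mul, conj_I]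
  linear_combination (conj (fderiv ℂ f z 1) / 2) * I_sq

lemma contDiff_gaussian : ContDiff ℝ 1 fun w : ℂ => ((rexp (-‖w‖ ^ 2) : ℝ) : ℂ) :=
  ofRealCLM.contDiff.comp (contDiff_norm_sq ℝ).neg.exp

lemma hasFDerivAt_gaussian (z : ℂ) :
    HasFDerivAt (fun w : ℂ => ((rexp (-‖w‖ ^ 2) : ℝ) : ℂ))
      ((-2 * rexp (-‖z‖ ^ 2)) • ofRealCLM.comp (innerSL ℝ z)) z := by
  refine (ofRealCLM.hasFDerivAt.comp z
    ((hasStrictFDerivAt_norm_sq z).hasFDerivAt.neg.exp)).congr_fderiv ?_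
  ext v
  simp
  ring

lemma wirtingerDeriv_gaussian :
    wirtingerDeriv (fun w : ℂ => ((rexp (-‖w‖ ^ 2) : ℝ) : ℂ)) z =
      -conj z * rexp (-‖z‖ ^ 2) := by
  simp only [wirtingerDeriv, (hasFDerivAt_gaussian z).fderiv, smul_apply,
    ContinuousLinearMap.comp_apply, innerSL_apply_apply, ofRealCLM_apply, Complex.inner]
  apply Complex.ext <;> simp <;> ring

lemma norm_fderiv_gaussian_le :
    ‖fderiv ℝ (fun w : ℂ => ((rexp (-‖w‖ ^ 2) : ℝ) : ℂ)) z‖ ≤ 2 * ‖z‖ * rexp (-‖z‖ ^ 2) := by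
  rw [(hasFDerivAt_gaussian z).fderiv]
  refine (norm_smul_le _ _).trans ?_
  refine (mul_le_mul_of_nonneg_left (ContinuousLinearMap.opNorm_comp_le _ _)
    (norm_nonneg _)).trans ?_
  rw [ofRealCLM_norm, innerSL_apply_norm, Real.norm_eq_abs, abs_mul, abs_of_pos (exp_pos _)]
  norm_num
  linarith

lemma exp_neg_norm_sq_le_exp_neg_re_sq (z : ℂ) : rexp (-‖z‖ ^ 2) ≤ rexp (-z.re ^ 2) := by
  have := pow_le_pow_left₀ (abs_nonneg _) (abs_re_le_norm z) 2
  rw [sq_abs] at this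
  exact exp_le_exp.mpr (neg_le_neg this)

end Wirtinger

def DominatedOnStrips (G : ℂ → ℂ) : Prop :=
  ∀ T : ℝ, ∃ g : ℝ → ℝ, Integrable g ∧
    ∀ z : ℂ, |z.im| ≤ T → ‖G z‖ ≤ g z.re ∧ ‖fderiv ℝ G z‖ ≤ g z.re

namespace DominatedOnStrips

variable {G : ℂ → ℂ}

lemma integrable_horizontal (hdom : DominatedOnStrips G) (hG : Continuous G) (y : ℝ) :
    Integrable fun x : ℝ => G (x + y * I) := by
  obtain ⟨g, hg, hb⟩ := hdom |y|
  refine hg.mono' (by fun_prop) (ae_of_all _ fun x => ?_)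
  simpa using (hb (x + y * I) (by simp)).1

lemma integrable_fderiv_horizontal (hdom : DominatedOnStrips G) (hG : Continuous (fderiv ℝ G))
    (y : ℝ) (v : ℂ) : Integrable fun x : ℝ => fderiv ℝ G (x + y * I) v := by
  obtain ⟨g, hg, hb⟩ := hdom |y|
  refine (hg.mul_const ‖v‖).mono' (by fun_prop) (ae_of_all _ fun x => ?_)
  refine (ContinuousLinearMap.le_opNorm _ v).trans ?_
  gcongr
  simpa using (hb (x + y * I) (by simp)).2

lemma integral_fderiv_one_eq_zero (hdom : DominatedOnStrips G) (hG : ContDiff ℝ 1 G) (y : ℝ) :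
    ∫ x : ℝ, fderiv ℝ G (x + y * I) 1 = 0 :=
  integral_eq_zero_of_hasDerivAt_of_integrable
    (fun _ => (hG.differentiable one_ne_zero _).hasDerivAt_horizontal)
    (hdom.integrable_fderiv_horizontal (hG.continuous_fderiv one_ne_zero) y 1)
    (hdom.integrable_horizontal hG.continuous y)

lemma hasDerivAt_integral_horizontal (hdom : DominatedOnStrips G) (hG : ContDiff ℝ 1 G)
    (y₀ : ℝ) :
    HasDerivAt (fun y : ℝ => ∫ x : ℝ, G (x + y * I))
      (∫ x : ℝ, fderiv ℝ G (x + y₀ * I) I) y₀ := by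
  obtain ⟨g, hg, hb⟩ := hdom (|y₀| + 1)
  refine (hasDerivAt_integral_of_dominated_loc_of_deriv_le (bound := g)
    (Metric.ball_mem_nhds y₀ one_pos) (Eventually.of_forall fun y => ?_)
    (hdom.integrable_horizontal hG.continuous y₀) ?_ (ae_of_all _ fun x y hy => ?_) hg
    (ae_of_all _ fun x y _ => (hG.differentiable one_ne_zero _).hasDerivAt_vertical)).2
  · exact (hG.continuous.comp (by fun_prop)).aestronglyMeasurable
  · exact ((hG.continuous_fderiv one_ne_zero).clm_apply continuous_const).comp
      (by fun_prop) |>.aestronglyMeasurable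
  · have hy : |y| ≤ |y₀| + 1 := by
      have := abs_sub_abs_le_abs_sub y y₀
      rw [Metric.mem_ball, Real.dist_eq] at hy
      linarith
    refine (ContinuousLinearMap.le_opNorm _ I).trans ?_
    simpa using (hb (x + y * I) (by simpa using hy)).2

theorem integral_wirtingerDeriv_eq_zero (hdom : DominatedOnStrips G) (hG : ContDiff ℝ 1 G)
    (hGi : Integrable G) (hDi : Integrable (wirtingerDeriv G)) :
    ∫ z, wirtingerDeriv G z = 0 := by
  set K : ℝ → ℂ := fun y => ∫ x : ℝ, fderiv ℝ G (x + y * I) I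
  have hslice (y : ℝ) : ∫ x : ℝ, wirtingerDeriv G (x + y * I) = -(I / 2) * K y := by
    have hcont := hG.continuous_fderiv one_ne_zero
    simp only [wirtingerDeriv]
    rw [integral_div, integral_sub (hdom.integrable_fderiv_horizontal hcont y 1)
      ((hdom.integrable_fderiv_horizontal hcont y I).const_mul I), integral_const_mul,
      hdom.integral_fderiv_one_eq_zero hG y]
    ring
  have hK : Integrable K := by
    refine (hDi.integral_add_mul_I.const_mul (2 * I)).congr (ae_of_all _ fun y => ?_)
    simp only [hslice]
    ring_nf
    simp [I_sq]
  have hK₀ : ∫ y, K y = 0 := integral_eq_zero_of_hasDerivAt_of_integrable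
    (hdom.hasDerivAt_integral_horizontal hG) hK hGi.integral_add_mul_I
  rw [integral_eq_integral_integral_add_mul_I hDi, integral_congr_ae (ae_of_all _ hslice),
    integral_const_mul, hK₀, mul_zero]

end DominatedOnStrips

lemma integrable_add_mul_abs_mul_exp_neg_sq (a b : ℝ) :
    Integrable fun x : ℝ => (a + b * |x|) * rexp (-x ^ 2) := by
  have h₀ : Integrable fun x : ℝ => rexp (-x ^ 2) := by
    simpa using integrable_exp_neg_mul_sq one_pos
  have h₁ : Integrable fun x : ℝ => |x| * rexp (-x ^ 2) := by
    simpa [abs_mul] using (integrable_mul_exp_neg_mul_sq one_pos).abs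
  refine ((h₀.const_mul a).add (h₁.const_mul b)).congr (ae_of_all _ fun x => ?_)
  simp only [Pi.add_apply]
  ring

lemma dominatedOnStrips_mul_gaussian_of_periodic {F : ℂ → ℂ} {c : ℝ} (hF : ContDiff ℝ 1 F)
    (hper : Periodic F c) (hc : 0 < c) :
    DominatedOnStrips fun z => F z * rexp (-‖z‖ ^ 2) := by
  intro T
  obtain ⟨C₀, hC₀⟩ := hper.exists_norm_le_of_abs_im_le hF.continuous hc T
  obtain ⟨C₁, hC₁⟩ := hper.fderiv.exists_norm_le_of_abs_im_le
    (hF.continuous_fderiv one_ne_zero) hc T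
  set C := max (max C₀ C₁) 0
  refine ⟨fun x => (C * (1 + 2 * T) + 2 * C * |x|) * rexp (-x ^ 2),
    integrable_add_mul_abs_mul_exp_neg_sq _ _, fun z hz => ?_⟩
  have hF₀ : ‖F z‖ ≤ C := (hC₀ z hz).trans ((le_max_left _ _).trans (le_max_left _ _))
  have hF₁ : ‖fderiv ℝ F z‖ ≤ C := (hC₁ z hz).trans ((le_max_right _ _).trans (le_max_left _ _))
  have hC : 0 ≤ C := le_max_right _ _
  have hT : 0 ≤ T := (abs_nonneg _).trans hz
  have hz' : ‖z‖ ≤ |z.re| + T := (norm_le_abs_re_add_abs_im z).trans (by linarith)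
  have hγ := exp_neg_norm_sq_le_exp_neg_re_sq z
  have hγ₀ := exp_pos (-‖z‖ ^ 2)
  beta_reduce
  constructor
  · rw [norm_mul, norm_real, norm_of_nonneg hγ₀.le]
    calc ‖F z‖ * rexp (-‖z‖ ^ 2) ≤ C * rexp (-z.re ^ 2) := by gcongr
      _ ≤ _ := by gcongr ?_ * _; nlinarith [abs_nonneg z.re]
  · rw [fderiv_fun_mul (hF.differentiable one_ne_zero z)
      (contDiff_gaussian.differentiable one_ne_zero z)]
    refine (norm_add_le _ _).trans ?_
    rw [norm_smul, norm_smul, norm_real, norm_of_nonneg hγ₀.le]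
    calc ‖F z‖ * ‖fderiv ℝ (fun w : ℂ => ((rexp (-‖w‖ ^ 2) : ℝ) : ℂ)) z‖ +
          rexp (-‖z‖ ^ 2) * ‖fderiv ℝ F z‖
        ≤ C * (2 * ‖z‖ * rexp (-‖z‖ ^ 2)) + rexp (-‖z‖ ^ 2) * C := by
          gcongr
          exact norm_fderiv_gaussian_le
      _ = C * (1 + 2 * ‖z‖) * rexp (-‖z‖ ^ 2) := by ring
      _ ≤ C * (1 + 2 * (|z.re| + T)) * rexp (-z.re ^ 2) := by gcongr
      _ = _ := by ring

lemma integrable_conj_mul_mul_of_integrable_norm_sq_mul {α : Type*} [MeasurableSpace α]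
    {μ : Measure α} {f g : α → ℂ} {w : α → ℝ} (hf : AEStronglyMeasurable f μ)
    (hg : AEStronglyMeasurable g μ) (hw : AEStronglyMeasurable w μ) (hw₀ : ∀ x, 0 ≤ w x)
    (hf₂ : Integrable (fun x => ‖f x‖ ^ 2 * w x) μ)
    (hg₂ : Integrable (fun x => ‖g x‖ ^ 2 * w x) μ) :
    Integrable (fun x => conj (f x) * g x * w x) μ := by
  refine ((hf₂.add hg₂).div_const 2).mono'
    ((continuous_conj.comp_aestronglyMeasurable hf).mul hg |>.mul
      (continuous_ofReal.comp_aestronglyMeasurable hw)) (ae_of_all _ fun x => ?_)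
  rw [Pi.add_apply, norm_mul, norm_mul, RCLike.norm_conj, norm_real, norm_of_nonneg (hw₀ x)]
  nlinarith [mul_nonneg (sq_nonneg (‖f x‖ - ‖g x‖)) (hw₀ x)]

theorem integral_conj_id_mul_mul_gaussian_eq_integral_conj_mul_deriv_mul_gaussian
    {ψ χ : ℂ → ℂ} {c : ℝ} (hψ : Differentiable ℂ ψ) (hχ : Differentiable ℂ χ)
    (hψp : Periodic ψ c) (hχp : Periodic χ c) (hc : 0 < c)
    (h₀ : Integrable fun z => conj (ψ z) * χ z * rexp (-‖z‖ ^ 2))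
    (h₁ : Integrable fun z => conj (z * ψ z) * χ z * rexp (-‖z‖ ^ 2))
    (h₂ : Integrable fun z => conj (ψ z) * deriv χ z * rexp (-‖z‖ ^ 2)) :
    ∫ z, conj (z * ψ z) * χ z * rexp (-‖z‖ ^ 2) =
      ∫ z, conj (ψ z) * deriv χ z * rexp (-‖z‖ ^ 2) := by
  have hψ' : ContDiff ℝ 1 fun z => conj (ψ z) :=
    conjCLE.contDiff.comp (hψ.contDiff.restrict_scalars ℝ)
  have hχ' : ContDiff ℝ 1 χ := hχ.contDiff.restrict_scalars ℝ
  have hwirt : wirtingerDeriv (fun z => conj (ψ z) * χ z * rexp (-‖z‖ ^ 2)) =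
      fun z => conj (ψ z) * deriv χ z * rexp (-‖z‖ ^ 2) -
        conj (z * ψ z) * χ z * rexp (-‖z‖ ^ 2) := by
    funext z
    rw [wirtingerDeriv_mul ((hψ'.mul hχ').differentiable one_ne_zero z)
        (contDiff_gaussian.differentiable one_ne_zero z),
      wirtingerDeriv_mul (hψ'.differentiable one_ne_zero z) (hχ'.differentiable one_ne_zero z),
      wirtingerDeriv_conj_comp (hψ z), wirtingerDeriv_eq_deriv (hχ z), wirtingerDeriv_gaussian,
      map_mul]
    ring
  have h := (dominatedOnStrips_mul_gaussian_of_periodic (hψ'.mul hχ')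
    ((hψp.comp conj).mul hχp) hc).integral_wirtingerDeriv_eq_zero
    ((hψ'.mul hχ').mul contDiff_gaussian) h₀ (hwirt ▸ h₂.sub h₁)
  rw [hwirt, integral_sub h₂ h₁, sub_eq_zero] at h
  exact h.symm

theorem creation_annihilation_adjoint_general (ψ χ φ : ℂ → ℂ)
    (hψ : memHP ψ) (hχ : memHP χ)
    (hzψ_L2 : Integrable (fun z : ℂ => ‖z * ψ z‖ ^ 2 * Real.exp (-‖z‖ ^ 2)))
    (hφ_proj : ∀ f, memHP f →
      ∫ z : ℂ, (starRingEnd ℂ) (z * ψ z - φ z) * f z * Real.exp (-‖z‖ ^ 2) = 0)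
    (h_lhs : Integrable (fun z : ℂ =>
      (starRingEnd ℂ) (φ z) * χ z * Real.exp (-‖z‖ ^ 2)))
    (h_rhs : Integrable (fun z : ℂ =>
      (starRingEnd ℂ) (ψ z) * deriv χ z * Real.exp (-‖z‖ ^ 2))) :
    (1 / (2 * (π : ℂ))) * ∫ z : ℂ, (starRingEnd ℂ) (φ z) * χ z * Real.exp (-‖z‖ ^ 2)
      = (1 / (2 * (π : ℂ))) *
        ∫ z : ℂ, (starRingEnd ℂ) (ψ z) * deriv χ z * Real.exp (-‖z‖ ^ 2) := by
  have hγ : AEStronglyMeasurable (fun z : ℂ => rexp (-‖z‖ ^ 2)) :=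
    (by fun_prop : Continuous fun z : ℂ => rexp (-‖z‖ ^ 2)).aestronglyMeasurable
  have hzψχ := integrable_conj_mul_mul_of_integrable_norm_sq_mul (f := fun z => z * ψ z)
    (continuous_id.mul hψ.1.continuous).aestronglyMeasurable
    hχ.1.continuous.aestronglyMeasurable hγ (fun _ => (exp_pos _).le) hzψ_L2 hχ.2.2
  have hψχ := integrable_conj_mul_mul_of_integrable_norm_sq_mul
    hψ.1.continuous.aestronglyMeasurable hχ.1.continuous.aestronglyMeasurable hγ
    (fun _ => (exp_pos _).le) hψ.2.2 hχ.2.2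
  have hproj := hφ_proj χ hχ
  simp only [map_sub, sub_mul] at hproj
  rw [integral_sub hzψχ h_lhs, sub_eq_zero] at hproj
  have hperiod {f : ℂ → ℂ} (hf : memHP f) : Periodic f (2 * π : ℝ) := by
    push_cast
    exact hf.2.1
  rw [← hproj, integral_conj_id_mul_mul_gaussian_eq_integral_conj_mul_deriv_mul_gaussian
    hψ.1 hχ.1 (hperiod hψ) (hperiod hχ) two_pi_pos hψχ hzψχ h_rhs]

/-- In `H_P`, the creation operator `a⁺ψ = P (z·ψ)` (orthogonal
projection of multiplication by `z` onto `H_P`) and the annihilation operator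
`aχ = χ'` are mutually adjoint: `⟨a⁺ψ, χ⟩ = ⟨ψ, aχ⟩` whenever both sides are
defined. Here `φ = a⁺ψ` is characterized by `φ ∈ H_P` together with the
orthogonality of `z·ψ - φ` to every element of `H_P`, and
`⟨f,g⟩ = (1/(2π)) ∫ conj (f z) * g z * e^{-|z|²} dz`. -/
theorem creation_annihilation_adjoint (ψ χ φ : ℂ → ℂ)
    (hψ : memHP ψ) (hχ : memHP χ)
    (hzψ_L2 : Integrable (fun z : ℂ => ‖z * ψ z‖ ^ 2 * Real.exp (-‖z‖ ^ 2)))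
    (hχ' : memHP (deriv χ))
    (hφ : memHP φ)
    (hφ_proj : ∀ f, memHP f →
      ∫ z : ℂ, (starRingEnd ℂ) (z * ψ z - φ z) * f z * Real.exp (-‖z‖ ^ 2) = 0)
    (h_lhs : Integrable (fun z : ℂ =>
      (starRingEnd ℂ) (φ z) * χ z * Real.exp (-‖z‖ ^ 2)))
    (h_rhs : Integrable (fun z : ℂ =>
      (starRingEnd ℂ) (ψ z) * deriv χ z * Real.exp (-‖z‖ ^ 2))) :
    (1 / (2 * (π : ℂ))) * ∫ z : ℂ, (starRingEnd ℂ) (φ z) * χ z * Real.exp (-‖z‖ ^ 2)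
      = (1 / (2 * (π : ℂ))) *
        ∫ z : ℂ, (starRingEnd ℂ) (ψ z) * deriv χ z * Real.exp (-‖z‖ ^ 2) :=
  creation_annihilation_adjoint_general ψ χ φ hψ hχ hzψ_L2 hφ_proj h_lhs h_rhs
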